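/- Let V = D ∪ P ∪ I be a nice mds partition of a graph G from nice mixed dominating set D ∪ M, and let P' ⊆ P. If M' is a minimum edge cover of the induced subgraph G[P'], then |M'| ≤ |M|. -/

import Mathlib

variable {V : Type*} [Fintype V] [DecidableEq V]

/-- The set of endpoints of an edge set `M`, i.e. `V(M)`. -/
def mVerts (M : Finset (Sym2 V)) : Finset V :=
  Finset.univ.filter fun v => ∃ e ∈ M, v ∈ e

/-- `D ∪ M` is a mixed dominating set of `G`: every vertex outside `D ∪ V(M)` has a
neighbor in `D`, and every edge outside `M` has an endpoint in `D ∪ V(M)`. -/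
def IsMDS (G : SimpleGraph V) (D : Finset V) (M : Finset (Sym2 V)) : Prop :=
  (∀ e ∈ M, e ∈ G.edgeSet) ∧
  (∀ v : V, v ∉ D → v ∉ mVerts M → ∃ u ∈ D, G.Adj u v) ∧
  (∀ e ∈ G.edgeSet, e ∉ M → ∃ v, v ∈ e ∧ (v ∈ D ∨ v ∈ mVerts M))

/-- `v` is a private neighbor of `u ∈ D`: `v ∉ D ∪ V(M)` and `N(v) ∩ D = {u}`. -/
def PrivNbr (G : SimpleGraph V) (D : Finset V) (M : Finset (Sym2 V)) (u v : V) : Prop :=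
  v ∉ D ∧ v ∉ mVerts M ∧ G.Adj u v ∧ ∀ w ∈ D, G.Adj w v → w = u

/-- A nice mixed dominating set: additionally `D ∩ V(M) = ∅` and every `u ∈ D` has
at least two private neighbors. -/
def IsNiceMDS (G : SimpleGraph V) (D : Finset V) (M : Finset (Sym2 V)) : Prop :=
  IsMDS G D M ∧ Disjoint D (mVerts M) ∧
    ∀ u ∈ D, ∃ v₁ v₂, v₁ ≠ v₂ ∧ PrivNbr G D M u v₁ ∧ PrivNbr G D M u v₂

/-!
Replace every edge of `M` that leaves `P'` by an edge of `M'` at its (unique) endpoint in `P'`,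
and drop the edges of `M` that miss `P'`. The result is an edge cover of `G[P']` with at most
`|M|` edges, so the minimum edge cover `M'` is no larger.
-/

theorem mem_mVerts {M : Finset (Sym2 V)} {v : V} : v ∈ mVerts M ↔ ∃ e ∈ M, v ∈ e := by
  simp [mVerts]

/-- An edge cover of the induced subgraph `G[S]`, given as a set of edges of `G`. -/
def IsEdgeCoverOn (G : SimpleGraph V) (S : Finset V) (N : Finset (Sym2 V)) : Prop :=
  (∀ e ∈ N, e ∈ G.edgeSet) ∧ (∀ e ∈ N, ∀ v ∈ e, v ∈ S) ∧ ∀ v ∈ S, ∃ e ∈ N, v ∈ e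

theorem Sym2.eq_of_mem_of_not_mem {α : Type*} {p : α → Prop} {e : Sym2 α} {u v w : α}
    (hu : u ∈ e) (hup : ¬p u) (hv : v ∈ e) (hvp : p v) (hw : w ∈ e) (hwp : p w) : v = w := by
  have huv : u ≠ v := by rintro rfl; exact hup hvp
  have huw : u ≠ w := by rintro rfl; exact hup hwp
  rw [(Sym2.mem_and_mem_iff huv).1 ⟨hu, hv⟩, Sym2.mem_iff] at hw
  exact (hw.resolve_left huw.symm).symm

theorem IsEdgeCoverOn.exists_card_le {G : SimpleGraph V} {S : Finset V} {N M : Finset (Sym2 V)}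
    (hN : IsEdgeCoverOn G S N) (hME : ∀ e ∈ M, e ∈ G.edgeSet)
    (hMcov : ∀ v ∈ S, ∃ e ∈ M, v ∈ e) :
    ∃ N', IsEdgeCoverOn G S N' ∧ N'.card ≤ M.card := by
  classical
  obtain ⟨hNE, hNin, hNcov⟩ := hN
  choose cov hcovN hmem_cov using hNcov
  let crossing (e : Sym2 V) : Finset (Sym2 V) :=
    (S.attach.filter fun v => v.1 ∈ e).image fun v => cov v.1 v.2
  let replace (e : Sym2 V) : Finset (Sym2 V) := if ∀ v ∈ e, v ∈ S then {e} else crossing e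
  have replace_card (e : Sym2 V) : (replace e).card ≤ 1 := by
    by_cases hin : ∀ v ∈ e, v ∈ S
    · simp only [replace, if_pos hin, Finset.card_singleton, le_refl]
    · obtain ⟨u, hu, huS⟩ := not_forall₂.1 hin
      rw [show replace e = crossing e from if_neg hin]
      refine Finset.card_image_le.trans (Finset.card_le_one.2 fun v hv w hw => ?_)
      simp only [Finset.mem_filter, Finset.mem_attach, true_and] at hv hw
      exact Subtype.ext (Sym2.eq_of_mem_of_not_mem (p := (· ∈ S)) hu huS hv v.2 hw w.2)
  have mem_replace {e f : Sym2 V} (he : e ∈ M) (hf : f ∈ replace e) :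
      f ∈ G.edgeSet ∧ ∀ v ∈ f, v ∈ S := by
    by_cases hin : ∀ v ∈ e, v ∈ S
    · rw [show replace e = {e} from if_pos hin, Finset.mem_singleton] at hf
      exact hf ▸ ⟨hME e he, hin⟩
    · rw [show replace e = crossing e from if_neg hin, Finset.mem_image] at hf
      obtain ⟨⟨v, hvS⟩, -, rfl⟩ := hf
      exact ⟨hNE _ (hcovN v hvS), hNin _ (hcovN v hvS)⟩
  have covered {v : V} (hvS : v ∈ S) : ∃ f ∈ M.biUnion replace, v ∈ f := by
    obtain ⟨e, he, hve⟩ := hMcov v hvS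
    by_cases hin : ∀ w ∈ e, w ∈ S
    · refine ⟨e, Finset.mem_biUnion.2 ⟨e, he, ?_⟩, hve⟩
      rw [show replace e = {e} from if_pos hin]
      exact Finset.mem_singleton_self e
    · refine ⟨cov v hvS, Finset.mem_biUnion.2 ⟨e, he, ?_⟩, hmem_cov v hvS⟩
      rw [show replace e = crossing e from if_neg hin]
      exact Finset.mem_image.2 ⟨⟨v, hvS⟩, by simpa using hve, rfl⟩
  refine ⟨M.biUnion replace, ⟨fun f hf => ?_, fun f hf => ?_, fun v hv => covered hv⟩, ?_⟩
  · obtain ⟨e, he, hf⟩ := Finset.mem_biUnion.1 hf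
    exact (mem_replace he hf).1
  · obtain ⟨e, he, hf⟩ := Finset.mem_biUnion.1 hf
    exact (mem_replace he hf).2
  · simpa using Finset.card_biUnion_le_card_mul M replace 1 fun e _ => replace_card e

/-- If `V = D ∪ P ∪ I` is a nice mds partition of `G` coming from the nice mixed
dominating set `D ∪ M` (so `P = V(M)`), `P' ⊆ P`, and `M'` is a minimum edge cover
of the induced subgraph `G[P']`, then `|M'| ≤ |M|`. -/
theorem stmt16 (G : SimpleGraph V) (D : Finset V) (M : Finset (Sym2 V))
    (h : IsNiceMDS G D M) (P' : Finset V) (hP' : P' ⊆ mVerts M)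
    (M' : Finset (Sym2 V))
    (hM'E : ∀ e ∈ M', e ∈ G.edgeSet)
    (hM'in : ∀ e ∈ M', ∀ v : V, v ∈ e → v ∈ P')
    (hM'cov : ∀ v ∈ P', ∃ e ∈ M', v ∈ e)
    (hmin : ∀ M'' : Finset (Sym2 V), (∀ e ∈ M'', e ∈ G.edgeSet) →
      (∀ e ∈ M'', ∀ v : V, v ∈ e → v ∈ P') → (∀ v ∈ P', ∃ e ∈ M'', v ∈ e) →
      M'.card ≤ M''.card) :
    M'.card ≤ M.card := by
  have hM'cover : IsEdgeCoverOn G P' M' := ⟨hM'E, hM'in, hM'cov⟩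
  obtain ⟨N, ⟨hNE, hNin, hNcov⟩, hcard⟩ :=
    hM'cover.exists_card_le h.1.1 fun v hv => mem_mVerts.1 (hP' hv)
  exact (hmin N hNE hNin hNcov).trans hcard
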